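/- arXiv:0907.4872 — 2 statements merged into one kernel-verified Lean document; each statement's English description precedes it below -/
import Mathlib

section
/- Let r ∈ ℝ^d with r_0 ≠ 0 and M_r contractive with ‖M_r x‖ ≤ ρ̃‖x‖, ρ̃ < 1. Then for every x ∈ ℤ^d and every n ∈ ℕ, the Hausdorff distance between M_r^n τ_r^{-n}(x) and M_r^{n+1} τ_r^{-n-1}(x) is at most ρ̃^n ‖(0,...,0,1)^t‖; in particular (M_r^n τ_r^{-n}(x))_{n≥0} is a Cauchy sequence with respect to the Hausdorff metric. -/
open Matrix Filter

noncomputable section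

/-- Scalar product r·z of a real vector with an integer vector. -/
def srsDot {d : ℕ} (r : Fin d → ℝ) (z : Fin d → ℤ) : ℝ := ∑ i, r i * (z i : ℝ)

/-- The shift radix map τ_r(z) = (z_1,...,z_{d-1}, -⌊r·z⌋). -/
def srsTau {d : ℕ} (r : Fin d → ℝ) (z : Fin d → ℤ) : Fin d → ℤ :=
  fun i => if h : (i : ℕ) + 1 < d then z ⟨(i : ℕ) + 1, h⟩ else -⌊srsDot r z⌋

/-- The companion matrix M_r of r. -/
def companion {d : ℕ} (r : Fin d → ℝ) : Matrix (Fin d) (Fin d) ℝ :=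
  fun i j => if (i : ℕ) + 1 < d then (if (j : ℕ) = (i : ℕ) + 1 then 1 else 0) else -r j

/-- The vector (0,...,0,v)^t. -/
def digitVec {d : ℕ} (v : ℝ) : Fin d → ℝ := fun i => if (i : ℕ) + 1 = d then v else 0

/-- Coordinatewise cast of an integer vector to a real vector. -/
def intToReal {d : ℕ} (z : Fin d → ℤ) : Fin d → ℝ := fun i => (z i : ℝ)

/-- M_r is contractive (spectral radius < 1). -/
def srsContractive {d : ℕ} (r : Fin d → ℝ) : Prop :=
  ∃ C > (0:ℝ), ∃ ρ : ℝ, 0 ≤ ρ ∧ ρ < 1 ∧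
    ∀ (n : ℕ) (x : Fin d → ℝ), ‖((companion r) ^ n).mulVec x‖ ≤ C * ρ ^ n * ‖x‖

/-- The SRS tile T_r(x), as the set of limit points lim M_r^n z_{-n} with
τ_r^n(z_{-n}) = x. -/
def srsTile {d : ℕ} (r : Fin d → ℝ) (x : Fin d → ℤ) : Set (Fin d → ℝ) :=
  {t | ∃ z : ℕ → (Fin d → ℤ), (∀ n, (srsTau r)^[n] (z n) = x) ∧
    Tendsto (fun n => ((companion r) ^ n).mulVec (intToReal (z n))) atTop (nhds t)}

/-!
Write `e = (0,…,0,1)`. The vectors `τ_r(w)` and `M_r w` differ only in the last coordinate, by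
the fractional part of `r·w`; hence `‖M_r^n τ_r(w) - M_r^{n+1} w‖ ≤ ρ̃^n ‖e‖`. This pairs every
point of `M_r^{n+1} τ_r^{-n-1}(x)` with one of `M_r^n τ_r^{-n}(x)`, and conversely as soon as
`τ_r` is onto. Surjectivity holds because `|r_0| = |det M_r| < 1` (as `M_r^n → 0`): the first
coordinate of a preimage moves `r·w` in steps of size `|r_0| ≤ 1`, so its floor can be made
to take any prescribed value. Chaining the one-step bounds and summing the geometric series
gives the Cauchy property.
-/
open Finset
open scoped Topology

namespace AddGroupSeminorm

variable {E : Type*} [AddCommGroup E] (p : AddGroupSeminorm E) {A : ℕ → Set E}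

theorem exists_mem_sub_le_sum_of_forall_succ {δ : ℕ → ℝ}
    (h : ∀ n, ∀ a ∈ A n, ∃ b ∈ A (n + 1), p (a - b) ≤ δ n) (m k : ℕ) :
    ∀ a ∈ A m, ∃ b ∈ A (m + k), p (a - b) ≤ ∑ i ∈ Ico m (m + k), δ i := by
  induction k with
  | zero => exact fun a ha => ⟨a, ha, by simp⟩
  | succ k ih =>
    intro a ha
    obtain ⟨b, hb, hab⟩ := ih a ha
    obtain ⟨c, hc, hbc⟩ := h _ b hb
    refine ⟨c, hc, ?_⟩
    calc p (a - c) ≤ p (a - b) + p (b - c) := by simpa using map_add_le_add p (a - b) (b - c)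
      _ ≤ _ := by rw [← add_assoc, sum_Ico_succ_top (by omega)]; linarith

theorem exists_mem_sub_le_sum_of_forall_pred {δ : ℕ → ℝ}
    (h : ∀ n, ∀ b ∈ A (n + 1), ∃ a ∈ A n, p (a - b) ≤ δ n) (m k : ℕ) :
    ∀ b ∈ A (m + k), ∃ a ∈ A m, p (a - b) ≤ ∑ i ∈ Ico m (m + k), δ i := by
  induction k with
  | zero => exact fun b hb => ⟨b, hb, by simp⟩
  | succ k ih =>
    intro b hb
    obtain ⟨c, hc, hcb⟩ := h (m + k) b hb
    obtain ⟨a, ha, hac⟩ := ih c hc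
    refine ⟨a, ha, ?_⟩
    calc p (a - b) ≤ p (a - c) + p (c - b) := by simpa using map_add_le_add p (a - c) (c - b)
      _ ≤ _ := by rw [← add_assoc, sum_Ico_succ_top (by omega)]; linarith

theorem exists_forall_ge_mem_sub_le_of_geometric {ρ D : ℝ} (hρ0 : 0 ≤ ρ) (hρ : ρ < 1)
    (hD : 0 ≤ D) (hfwd : ∀ n, ∀ a ∈ A n, ∃ b ∈ A (n + 1), p (a - b) ≤ ρ ^ n * D)
    (hbwd : ∀ n, ∀ b ∈ A (n + 1), ∃ a ∈ A n, p (a - b) ≤ ρ ^ n * D) {ε : ℝ} (hε : 0 < ε) :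
    ∃ N, ∀ m n, N ≤ m → N ≤ n → ∀ a ∈ A m, ∃ b ∈ A n, p (a - b) ≤ ε := by
  have htail (m k : ℕ) : ∑ i ∈ Ico m (m + k), ρ ^ i * D ≤ ρ ^ m * D / (1 - ρ) := by
    rw [← sum_mul, mul_div_right_comm]
    exact mul_le_mul_of_nonneg_right (geom_sum_Ico_le_of_lt_one hρ0 hρ) hD
  have hlim : Tendsto (fun m => ρ ^ m * D / (1 - ρ)) atTop (𝓝 0) := by
    simpa using ((tendsto_pow_atTop_nhds_zero_of_lt_one hρ0 hρ).mul_const D).div_const (1 - ρ)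
  obtain ⟨N, hN⟩ := eventually_atTop.1 (hlim.eventually (ge_mem_nhds hε))
  refine ⟨N, fun m n hm hn a ha => ?_⟩
  rcases le_total m n with hmn | hnm
  · obtain ⟨k, rfl⟩ := Nat.exists_eq_add_of_le hmn
    obtain ⟨b, hb, hab⟩ := p.exists_mem_sub_le_sum_of_forall_succ hfwd m k a ha
    exact ⟨b, hb, hab.trans ((htail m k).trans (hN m hm))⟩
  · obtain ⟨k, rfl⟩ := Nat.exists_eq_add_of_le hnm
    obtain ⟨b, hb, hba⟩ := p.exists_mem_sub_le_sum_of_forall_pred hbwd n k a ha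
    exact ⟨b, hb, (map_sub_rev p a b).trans_le (hba.trans ((htail n k).trans (hN n hn)))⟩

end AddGroupSeminorm

namespace Seminorm

theorem le_sum_mul_norm_pi {ι : Type*} [Fintype ι] [DecidableEq ι] (p : Seminorm ℝ (ι → ℝ))
    (v : ι → ℝ) : p v ≤ (∑ i, p (Pi.single i 1)) * ‖v‖ := by
  calc p v = p (∑ i, v i • Pi.single i 1) := by congr 1; ext j; simp [Pi.single_apply]
    _ ≤ ∑ i, p (v i • Pi.single i 1) :=
        le_sum_of_subadditive p (map_zero p).le (map_add_le_add p) _ _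
    _ = ∑ i, |v i| * p (Pi.single i 1) := by simp only [map_smul_eq_mul, Real.norm_eq_abs]
    _ ≤ ∑ i, ‖v‖ * p (Pi.single i 1) := sum_le_sum fun i _ =>
        mul_le_mul_of_nonneg_right (norm_le_pi_norm v i) (apply_nonneg p _)
    _ = (∑ i, p (Pi.single i 1)) * ‖v‖ := by rw [sum_mul]; simp only [mul_comm]

theorem continuous_pi {ι : Type*} [Fintype ι] (p : Seminorm ℝ (ι → ℝ)) : Continuous p := by
  classical
  refine Seminorm.continuous_of_continuousAt_zero ?_
  have h := ((continuous_norm (E := ι → ℝ)).tendsto 0).const_mul (∑ i, p (Pi.single i 1))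
  rw [norm_zero, mul_zero] at h
  rw [ContinuousAt, map_zero]
  exact squeeze_zero (fun v => apply_nonneg p v) p.le_sum_mul_norm_pi h

theorem exists_pos_mul_norm_le {E : Type*} [NormedAddCommGroup E] [NormedSpace ℝ E]
    [ProperSpace E] (p : Seminorm ℝ E) (hp : Continuous p) (hdef : ∀ x, p x = 0 → x = 0) :
    ∃ c > 0, ∀ x, c * ‖x‖ ≤ p x := by
  rcases subsingleton_or_nontrivial E with hE | hE
  · exact ⟨1, one_pos, fun x => by simp [Subsingleton.elim x 0]⟩
  obtain ⟨u, hu, hmin⟩ := (isCompact_sphere (0 : E) 1).exists_isMinOn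
    (NormedSpace.sphere_nonempty.2 zero_le_one) hp.continuousOn
  have hu1 : ‖u‖ = 1 := by simpa using hu
  have hpu : 0 < p u := (apply_nonneg p u).lt_of_ne fun h => by simp [hdef u h.symm] at hu1
  refine ⟨p u, hpu, fun x => ?_⟩
  rcases eq_or_ne x 0 with rfl | hx
  · simp
  have hx1 : ‖x‖⁻¹ • x ∈ Metric.sphere (0 : E) 1 := by simp [norm_smul, hx]
  calc p u * ‖x‖ ≤ p (‖x‖⁻¹ • x) * ‖x‖ := mul_le_mul_of_nonneg_right (hmin hx1) (norm_nonneg x)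
    _ = p x := by
      rw [map_smul_eq_mul, norm_inv, norm_norm, mul_comm, ← mul_assoc,
        mul_inv_cancel₀ (norm_ne_zero_iff.2 hx), one_mul]

end Seminorm

namespace Matrix

variable {ι : Type*} [Fintype ι] [DecidableEq ι]

theorem le_pow_mul_of_mulVec_le (M : Matrix ι ι ℝ) (p : (ι → ℝ) → ℝ) {ρ : ℝ} (hρ0 : 0 ≤ ρ)
    (hM : ∀ v, p (M *ᵥ v) ≤ ρ * p v) (n : ℕ) (v : ι → ℝ) : p (M ^ n *ᵥ v) ≤ ρ ^ n * p v := by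
  induction n with
  | zero => simp
  | succ n ih =>
    calc p (M ^ (n + 1) *ᵥ v) = p (M *ᵥ (M ^ n *ᵥ v)) := by rw [pow_succ', mulVec_mulVec]
      _ ≤ ρ * (ρ ^ n * p v) := (hM _).trans (mul_le_mul_of_nonneg_left ih hρ0)
      _ = ρ ^ (n + 1) * p v := by ring

theorem tendsto_pow_atTop_nhds_zero_of_mulVec_le (M : Matrix ι ι ℝ)
    (p : Seminorm ℝ (ι → ℝ)) (hdef : ∀ v, p v = 0 → v = 0) {ρ : ℝ} (hρ0 : 0 ≤ ρ) (hρ : ρ < 1)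
    (hM : ∀ v, p (M *ᵥ v) ≤ ρ * p v) : Tendsto (fun n => M ^ n) atTop (𝓝 0) := by
  obtain ⟨c, hc, hlow⟩ := p.exists_pos_mul_norm_le p.continuous_pi hdef
  have hvec (v : ι → ℝ) : Tendsto (fun n => M ^ n *ᵥ v) atTop (𝓝 0) := by
    refine squeeze_zero_norm (fun n => ?_)
      (by simpa using (tendsto_pow_atTop_nhds_zero_of_lt_one hρ0 hρ).mul_const (p v / c))
    rw [mul_div_assoc', le_div_iff₀ hc, mul_comm]
    exact (hlow _).trans (M.le_pow_mul_of_mulVec_le p hρ0 hM n v)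
  refine tendsto_pi_nhds.2 fun i => tendsto_pi_nhds.2 fun j => ?_
  simpa [mulVec_single_one] using tendsto_pi_nhds.1 (hvec (Pi.single j 1)) i

theorem abs_det_lt_one_of_tendsto_pow [Nonempty ι] {M : Matrix ι ι ℝ}
    (h : Tendsto (fun n => M ^ n) atTop (𝓝 0)) : |M.det| < 1 := by
  have hdet := ((continuous_id.matrix_det).tendsto 0).comp h
  simp only [Function.comp_def, id, det_pow, det_zero] at hdet
  exact tendsto_pow_atTop_nhds_zero_iff.1 hdet

end Matrix

variable {d : ℕ}

theorem abs_det_companion (hd : 0 < d) (r : Fin d → ℝ) :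
    |(companion r).det| = |r ⟨0, hd⟩| := by
  obtain ⟨d, rfl⟩ : ∃ d', d = d' + 1 := ⟨d - 1, by omega⟩
  rw [det_succ_column_zero, Finset.sum_eq_single (Fin.last d)]
  · have hminor : (companion r).submatrix Fin.castSucc Fin.succ = 1 := by
      ext i j
      simp [companion, one_apply, Fin.ext_iff, eq_comm]
    simp [hminor, companion, abs_mul]
  · intro i _ hi
    have hlt : (i : ℕ) + 1 < d + 1 := by
      have := Fin.val_lt_last hi
      omega
    simp [companion, hlt]
  · simp

theorem abs_lt_one_of_companion_mulVec_le (hd : 0 < d) (r : Fin d → ℝ)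
    (p : Seminorm ℝ (Fin d → ℝ)) (hdef : ∀ v, p v = 0 → v = 0) {ρ : ℝ} (hρ0 : 0 ≤ ρ)
    (hρ : ρ < 1) (hcontr : ∀ v, p (companion r *ᵥ v) ≤ ρ * p v) : |r ⟨0, hd⟩| < 1 := by
  have : Nonempty (Fin d) := ⟨⟨0, hd⟩⟩
  rw [← abs_det_companion hd]
  exact abs_det_lt_one_of_tendsto_pow
    ((companion r).tendsto_pow_atTop_nhds_zero_of_mulVec_le p hdef hρ0 hρ hcontr)

theorem exists_floor_mul_add_eq_of_pos {a : ℝ} (ha : 0 < a) (ha1 : a ≤ 1) (c : ℝ) (n : ℤ) :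
    ∃ k : ℤ, ⌊a * k + c⌋ = n := by
  refine ⟨⌈(n - c) / a⌉, Int.floor_eq_iff.2 ⟨?_, ?_⟩⟩
  · have h := mul_le_mul_of_nonneg_left (Int.le_ceil ((n - c) / a)) ha.le
    rw [mul_div_cancel₀ _ ha.ne'] at h
    linarith
  · have h := mul_lt_mul_of_pos_left (Int.ceil_lt_add_one ((n - c) / a)) ha
    rw [mul_add, mul_div_cancel₀ _ ha.ne'] at h
    linarith

theorem exists_floor_mul_add_eq {a : ℝ} (ha : a ≠ 0) (ha1 : |a| ≤ 1) (c : ℝ) (n : ℤ) :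
    ∃ k : ℤ, ⌊a * k + c⌋ = n := by
  rcases ha.lt_or_gt with hneg | hpos
  · obtain ⟨k, hk⟩ :=
      exists_floor_mul_add_eq_of_pos (neg_pos.2 hneg) ((neg_le_abs a).trans ha1) c n
    exact ⟨-k, by simpa using hk⟩
  · exact exists_floor_mul_add_eq_of_pos hpos ((le_abs_self a).trans ha1) c n

theorem srsTau_surjective (hd : 0 < d) {r : Fin d → ℝ} (hr0 : r ⟨0, hd⟩ ≠ 0)
    (hr1 : |r ⟨0, hd⟩| ≤ 1) : Function.Surjective (srsTau r) := by
  intro z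
  let u : Fin d → ℤ := fun i => if h : (i : ℕ) = 0 then 0 else z ⟨i - 1, by omega⟩
  obtain ⟨k, hk⟩ := exists_floor_mul_add_eq hr0 hr1 (srsDot r u) (-z ⟨d - 1, by omega⟩)
  have hdot : srsDot r (u + Pi.single ⟨0, hd⟩ k) = r ⟨0, hd⟩ * k + srsDot r u := by
    simp [srsDot, mul_add, Finset.sum_add_distrib, Pi.single_apply, add_comm]
  refine ⟨u + Pi.single ⟨0, hd⟩ k, funext fun i => ?_⟩
  unfold srsTau
  split_ifs with h
  · simp [u, Fin.ext_iff]
  · rw [hdot, hk, neg_neg]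
    congr
    omega

theorem companion_mulVec_apply (r v : Fin d → ℝ) (i : Fin d) :
    (companion r *ᵥ v) i = if h : (i : ℕ) + 1 < d then v ⟨i + 1, h⟩ else -(r ⬝ᵥ v) := by
  split_ifs with h
  · rw [mulVec, dotProduct, Finset.sum_eq_single ⟨i + 1, h⟩]
    · simp [companion, h]
    · intro j _ hj
      simp [companion, h, Fin.ext_iff.not.1 hj]
    · simp
  · simp [mulVec, dotProduct, companion, h]

theorem intToReal_srsTau_sub_companion_mulVec (r : Fin d → ℝ) (w : Fin d → ℤ) :
    intToReal (srsTau r w) - companion r *ᵥ intToReal w = Int.fract (srsDot r w) • digitVec 1 := by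
  ext i
  rw [Pi.sub_apply, companion_mulVec_apply]
  by_cases h : (i : ℕ) + 1 < d
  · simp [intToReal, srsTau, digitVec, h, h.ne]
  · have hi : (i : ℕ) + 1 = d := by omega
    simp [intToReal, srsTau, digitVec, srsDot, dotProduct, hi, ← Int.self_sub_floor]
    ring

section Approximation

variable {r : Fin d → ℝ} (p : Seminorm ℝ (Fin d → ℝ)) {ρ : ℝ}

theorem seminorm_pow_mulVec_srsTau_sub_le (hρ0 : 0 ≤ ρ)
    (hcontr : ∀ v, p (companion r *ᵥ v) ≤ ρ * p v) (n : ℕ) (w : Fin d → ℤ) :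
    p (companion r ^ n *ᵥ intToReal (srsTau r w) - companion r ^ (n + 1) *ᵥ intToReal w)
      ≤ ρ ^ n * p (digitVec 1) := by
  calc _ = p (companion r ^ n *ᵥ (Int.fract (srsDot r w) • digitVec 1)) := by
        rw [← intToReal_srsTau_sub_companion_mulVec, mulVec_sub, pow_succ, mulVec_mulVec]
    _ ≤ ρ ^ n * p (Int.fract (srsDot r w) • digitVec 1) :=
        (companion r).le_pow_mul_of_mulVec_le p hρ0 hcontr n _
    _ ≤ ρ ^ n * p (digitVec 1) := by
        rw [map_smul_eq_mul, Real.norm_of_nonneg (Int.fract_nonneg _)]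
        gcongr
        exact mul_le_of_le_one_left (apply_nonneg p _) (Int.fract_lt_one _).le

variable (r) in
/-- The approximation `M_r^n τ_r^{-n}(x)` of the tile `T_r(x)`. -/
def srsApprox (x : Fin d → ℤ) (n : ℕ) : Set (Fin d → ℝ) :=
  (fun z => companion r ^ n *ᵥ intToReal z) '' {z | (srsTau r)^[n] z = x}

theorem exists_mem_srsApprox_succ (hd : 0 < d) (hr0 : r ⟨0, hd⟩ ≠ 0) (hr1 : |r ⟨0, hd⟩| ≤ 1)
    (hρ0 : 0 ≤ ρ) (hcontr : ∀ v, p (companion r *ᵥ v) ≤ ρ * p v) (x : Fin d → ℤ) (n : ℕ) :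
    ∀ a ∈ srsApprox r x n, ∃ b ∈ srsApprox r x (n + 1), p (a - b) ≤ ρ ^ n * p (digitVec 1) := by
  rintro _ ⟨z, hz, rfl⟩
  obtain ⟨w, rfl⟩ := srsTau_surjective hd hr0 hr1 z
  exact ⟨_, ⟨w, (Function.iterate_succ_apply _ n w).trans hz, rfl⟩,
    seminorm_pow_mulVec_srsTau_sub_le p hρ0 hcontr n w⟩

theorem exists_mem_srsApprox_of_mem_succ (hρ0 : 0 ≤ ρ)
    (hcontr : ∀ v, p (companion r *ᵥ v) ≤ ρ * p v) (x : Fin d → ℤ) (n : ℕ) :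
    ∀ b ∈ srsApprox r x (n + 1), ∃ a ∈ srsApprox r x n, p (a - b) ≤ ρ ^ n * p (digitVec 1) := by
  rintro _ ⟨w, hw, rfl⟩
  exact ⟨_, ⟨srsTau r w, (Function.iterate_succ_apply _ n w).symm.trans hw, rfl⟩,
    seminorm_pow_mulVec_srsTau_sub_le p hρ0 hcontr n w⟩

end Approximation

theorem srs_approx_hausdorff_cauchy_general (d : ℕ) (hd : 0 < d) (r : Fin d → ℝ)
    (hr0 : r ⟨0, hd⟩ ≠ 0)
    (Nm : (Fin d → ℝ) → ℝ) (ρ : ℝ) (hρ0 : 0 ≤ ρ) (hρ : ρ < 1)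
    (hadd : ∀ x y, Nm (x + y) ≤ Nm x + Nm y)
    (hsmul : ∀ (c : ℝ) x, Nm (c • x) = |c| * Nm x)
    (hdef : ∀ x, Nm x = 0 → x = 0)
    (hcontr : ∀ x, Nm ((companion r).mulVec x) ≤ ρ * Nm x)
    (x : Fin d → ℤ) :
    (∀ n : ℕ, ∀ a ∈ (fun z => ((companion r) ^ n).mulVec (intToReal z)) ''
        {z : Fin d → ℤ | (srsTau r)^[n] z = x},
      ∃ b ∈ (fun z => ((companion r) ^ (n+1)).mulVec (intToReal z)) ''
          {z : Fin d → ℤ | (srsTau r)^[n+1] z = x},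
        Nm (a - b) ≤ ρ ^ n * Nm (digitVec 1)) ∧
    (∀ n : ℕ, ∀ b ∈ (fun z => ((companion r) ^ (n+1)).mulVec (intToReal z)) ''
        {z : Fin d → ℤ | (srsTau r)^[n+1] z = x},
      ∃ a ∈ (fun z => ((companion r) ^ n).mulVec (intToReal z)) ''
          {z : Fin d → ℤ | (srsTau r)^[n] z = x},
        Nm (a - b) ≤ ρ ^ n * Nm (digitVec 1)) ∧
    (∀ ε > (0:ℝ), ∃ N : ℕ, ∀ m n : ℕ, N ≤ m → N ≤ n →
      ∀ a ∈ (fun z => ((companion r) ^ m).mulVec (intToReal z)) ''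
          {z : Fin d → ℤ | (srsTau r)^[m] z = x},
        ∃ b ∈ (fun z => ((companion r) ^ n).mulVec (intToReal z)) ''
            {z : Fin d → ℤ | (srsTau r)^[n] z = x},
          Nm (a - b) ≤ ε) := by
  let p : Seminorm ℝ (Fin d → ℝ) := Seminorm.of Nm hadd hsmul
  have hr1 : |r ⟨0, hd⟩| ≤ 1 := (abs_lt_one_of_companion_mulVec_le hd r p hdef hρ0 hρ hcontr).le
  have hfwd := exists_mem_srsApprox_succ p hd hr0 hr1 hρ0 hcontr x
  have hbwd := exists_mem_srsApprox_of_mem_succ p hρ0 hcontr x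
  exact ⟨hfwd, hbwd, fun ε hε => p.toAddGroupSeminorm.exists_forall_ge_mem_sub_le_of_geometric
    hρ0 hρ (apply_nonneg p _) hfwd hbwd hε⟩

/-- the Hausdorff distance (w.r.t. the norm Nm) between
M_r^n τ_r^{-n}(x) and M_r^{n+1} τ_r^{-n-1}(x) is at most ρ̃^n Nm((0,…,0,1)^t);
in particular the sequence of these sets is Cauchy w.r.t. the Hausdorff metric. -/
theorem srs_approx_hausdorff_cauchy (d : ℕ) (hd : 0 < d) (r : Fin d → ℝ)
    (hr0 : r ⟨0, hd⟩ ≠ 0)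
    (Nm : (Fin d → ℝ) → ℝ) (ρ : ℝ) (hρ0 : 0 ≤ ρ) (hρ : ρ < 1)
    (hadd : ∀ x y, Nm (x + y) ≤ Nm x + Nm y)
    (hsmul : ∀ (c : ℝ) x, Nm (c • x) = |c| * Nm x)
    (hpos : ∀ x, 0 ≤ Nm x)
    (hdef : ∀ x, Nm x = 0 → x = 0)
    (hcontr : ∀ x, Nm ((companion r).mulVec x) ≤ ρ * Nm x)
    (x : Fin d → ℤ) :
    (∀ n : ℕ, ∀ a ∈ (fun z => ((companion r) ^ n).mulVec (intToReal z)) ''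
        {z : Fin d → ℤ | (srsTau r)^[n] z = x},
      ∃ b ∈ (fun z => ((companion r) ^ (n+1)).mulVec (intToReal z)) ''
          {z : Fin d → ℤ | (srsTau r)^[n+1] z = x},
        Nm (a - b) ≤ ρ ^ n * Nm (digitVec 1)) ∧
    (∀ n : ℕ, ∀ b ∈ (fun z => ((companion r) ^ (n+1)).mulVec (intToReal z)) ''
        {z : Fin d → ℤ | (srsTau r)^[n+1] z = x},
      ∃ a ∈ (fun z => ((companion r) ^ n).mulVec (intToReal z)) ''
          {z : Fin d → ℤ | (srsTau r)^[n] z = x},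
        Nm (a - b) ≤ ρ ^ n * Nm (digitVec 1)) ∧
    (∀ ε > (0:ℝ), ∃ N : ℕ, ∀ m n : ℕ, N ≤ m → N ≤ n →
      ∀ a ∈ (fun z => ((companion r) ^ m).mulVec (intToReal z)) ''
          {z : Fin d → ℤ | (srsTau r)^[m] z = x},
        ∃ b ∈ (fun z => ((companion r) ^ n).mulVec (intToReal z)) ''
            {z : Fin d → ℤ | (srsTau r)^[n] z = x},
          Nm (a - b) ≤ ε) :=
  srs_approx_hausdorff_cauchy_general d hd r hr0 Nm ρ hρ0 hρ hadd hsmul hdef hcontr x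
end
end

section
/- Let r ∈ int(D_d) be reduced. The cardinality of {x ∈ ℤ^d : t ∈ T_r(x)} is uniformly bounded over t ∈ ℝ^d, and the family {T_r(x) : x ∈ ℤ^d} is locally finite: every open ball intersects only finitely many tiles. -/
open Matrix Filter

noncomputable section

/-!
Since `M_r z = τ_r(z) - {r·z} e_d`, telescoping gives
`‖M_r^n z - τ_r^n(z)‖ ≤ ∑_{k<n} ‖M_r^k e_d‖ ≤ R`, so `T_r(x)` lies in the closed ball of
radius `R` about `x`. The tiles containing `t` are therefore indexed by lattice points of a
ball of radius `R` about `t`, at most `(⌊2R⌋₊ + 1)^d` of them, and a ball `B(c, ε)` only meets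
tiles indexed by the finitely many lattice points within `R + ε` of `c`.
-/

open Metric

/-- The paper's `R = ∑ₖ ‖M_r^k e_d‖`, where `e_d = digitVec 1`. -/
def srsRadius {d : ℕ} (r : Fin d → ℝ) : ℝ :=
  ∑' k : ℕ, ‖((companion r) ^ k) *ᵥ digitVec 1‖

lemma companion_mulVec_intToReal {d : ℕ} (r : Fin d → ℝ) (z : Fin d → ℤ) :
    (companion r) *ᵥ intToReal z =
      intToReal (srsTau r z) - Int.fract (srsDot r z) • digitVec 1 := by
  funext i
  simp only [companion, mulVec, dotProduct, intToReal, srsTau, digitVec, Pi.sub_apply,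
    Pi.smul_apply, smul_eq_mul]
  by_cases h : (i : ℕ) + 1 < d
  · have hsum : ∑ j : Fin d, (if (j : ℕ) = (i : ℕ) + 1 then (1 : ℝ) else 0) * (z j : ℝ)
        = z ⟨(i : ℕ) + 1, h⟩ := by
      rw [Finset.sum_eq_single_of_mem ⟨(i : ℕ) + 1, h⟩ (Finset.mem_univ _)]
      · simp
      · intro j _ hj
        rw [if_neg (fun hj' => hj (Fin.ext hj')), zero_mul]
    simp only [if_pos h, dif_pos h, if_neg (show (i : ℕ) + 1 ≠ d by omega), hsum, mul_zero,
      sub_zero]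
  · have hsum : ∑ j : Fin d, -r j * (z j : ℝ) = -srsDot r z := by
      simp only [srsDot, neg_mul, Finset.sum_neg_distrib]
    simp only [if_neg h, dif_neg h, if_pos (show (i : ℕ) + 1 = d by omega), hsum, Int.fract]
    push_cast
    ring

lemma norm_companion_pow_mulVec_sub_iterate_le {d : ℕ} (r : Fin d → ℝ) (n : ℕ)
    (z : Fin d → ℤ) :
    ‖((companion r) ^ n) *ᵥ intToReal z - intToReal ((srsTau r)^[n] z)‖
      ≤ ∑ k ∈ Finset.range n, ‖((companion r) ^ k) *ᵥ digitVec 1‖ := by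
  induction n generalizing z with
  | zero => simp
  | succ n ih =>
    set e : Fin d → ℝ := ((companion r) ^ n) *ᵥ digitVec 1
    set f := Int.fract (srsDot r z)
    have hstep : ((companion r) ^ (n + 1)) *ᵥ intToReal z - intToReal ((srsTau r)^[n + 1] z)
        = (((companion r) ^ n) *ᵥ intToReal (srsTau r z)
            - intToReal ((srsTau r)^[n] (srsTau r z))) - f • e := by
      rw [pow_succ, ← mulVec_mulVec, companion_mulVec_intToReal, mulVec_sub, mulVec_smul,
        Function.iterate_succ_apply]
      abel
    have hdigit : ‖f • e‖ ≤ ‖e‖ := by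
      rw [norm_smul, Real.norm_eq_abs, Int.abs_fract]
      exact mul_le_of_le_one_left (norm_nonneg e) (Int.fract_lt_one _).le
    calc _ ≤ _ := by rw [hstep]; exact norm_sub_le _ _
      _ ≤ _ := add_le_add (ih _) hdigit
      _ = _ := (Finset.sum_range_succ _ n).symm

lemma srsContractive.summable_norm_companion_pow_mulVec {d : ℕ} {r : Fin d → ℝ}
    (h : srsContractive r) (v : Fin d → ℝ) :
    Summable fun k : ℕ => ‖((companion r) ^ k) *ᵥ v‖ := by
  obtain ⟨C, -, ρ, hρ0, hρ1, hcon⟩ := h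
  refine Summable.of_nonneg_of_le (fun _ => norm_nonneg _) (fun k => ?_)
    (((summable_geometric_of_lt_one hρ0 hρ1).mul_left C).mul_right ‖v‖)
  exact hcon k v

lemma srsTile_subset_closedBall {d : ℕ} {r : Fin d → ℝ} (h : srsContractive r)
    (x : Fin d → ℤ) : srsTile r x ⊆ closedBall (intToReal x) (srsRadius r) := by
  rintro t ⟨z, hz, hlim⟩
  refine isClosed_closedBall.mem_of_tendsto hlim (Eventually.of_forall fun n => ?_)
  rw [mem_closedBall, dist_eq_norm, ← hz n]
  exact (norm_companion_pow_mulVec_sub_iterate_le r n (z n)).trans <|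
    (h.summable_norm_companion_pow_mulVec _).sum_le_tsum _ fun _ _ => norm_nonneg _

lemma preimage_intToReal_closedBall_subset {d : ℕ} (c : Fin d → ℝ) (R : ℝ) :
    intToReal ⁻¹' closedBall c R ⊆
      ↑(Fintype.piFinset fun i => Finset.Icc ⌈c i - R⌉ (⌈c i - R⌉ + ⌊2 * R⌋₊)) := by
  intro x hx
  simp only [Finset.mem_coe, Fintype.mem_piFinset, Finset.mem_Icc]
  intro i
  have hi : |(x i : ℝ) - c i| ≤ R := (dist_le_pi_dist (intToReal x) c i).trans hx
  rw [abs_le] at hi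
  have hceil := Int.le_ceil (c i - R)
  have hfloor : x i - ⌈c i - R⌉ ≤ ⌊2 * R⌋ := Int.le_floor.mpr (by push_cast; linarith)
  have hnat := Int.self_le_toNat ⌊2 * R⌋
  rw [Int.floor_toNat] at hnat
  exact ⟨Int.ceil_le.mpr (by linarith), by omega⟩

lemma finite_preimage_intToReal_closedBall {d : ℕ} (c : Fin d → ℝ) (R : ℝ) :
    (intToReal ⁻¹' closedBall c R).Finite :=
  (Finset.finite_toSet _).subset (preimage_intToReal_closedBall_subset c R)

lemma ncard_preimage_intToReal_closedBall_le {d : ℕ} (c : Fin d → ℝ) (R : ℝ) :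
    (intToReal ⁻¹' closedBall c R).ncard ≤ (⌊2 * R⌋₊ + 1) ^ d := by
  refine (Set.ncard_le_ncard (preimage_intToReal_closedBall_subset c R)
    (Finset.finite_toSet _)).trans_eq ?_
  rw [Set.ncard_coe_finset, Fintype.card_piFinset]
  simp only [Int.card_Icc, add_assoc, add_sub_cancel_left]
  norm_cast
  simp

theorem srsTile_boundedDegree_locallyFinite_general (d : ℕ) (r : Fin d → ℝ)
    (hcontr : srsContractive r) :
    (∃ B : ℕ, ∀ t : Fin d → ℝ,
      {x : Fin d → ℤ | t ∈ srsTile r x}.Finite ∧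
      {x : Fin d → ℤ | t ∈ srsTile r x}.ncard ≤ B) ∧
    ∀ (c : Fin d → ℝ) (ε : ℝ), 0 < ε →
      {x : Fin d → ℤ | (Metric.ball c ε ∩ srsTile r x).Nonempty}.Finite := by
  set R := srsRadius r
  have hdegree (t : Fin d → ℝ) : {x | t ∈ srsTile r x} ⊆ intToReal ⁻¹' closedBall t R :=
    fun x ht => mem_closedBall_comm.mp (srsTile_subset_closedBall hcontr x ht)
  have hlocal (c : Fin d → ℝ) (ε : ℝ) :
      {x | (ball c ε ∩ srsTile r x).Nonempty} ⊆ intToReal ⁻¹' closedBall c (R + ε) := by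
    rintro x ⟨t, htc, htx⟩
    calc dist (intToReal x) c ≤ dist (intToReal x) t + dist t c := dist_triangle _ _ _
      _ ≤ R + ε :=
        add_le_add (mem_closedBall'.mp (srsTile_subset_closedBall hcontr x htx)) htc.le
  refine ⟨⟨(⌊2 * R⌋₊ + 1) ^ d, fun t => ⟨?_, ?_⟩⟩, fun c ε _ => ?_⟩
  · exact (finite_preimage_intToReal_closedBall t R).subset (hdegree t)
  · exact (Set.ncard_le_ncard (hdegree t) (finite_preimage_intToReal_closedBall t R)).trans
      (ncard_preimage_intToReal_closedBall_le t R)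
  · exact (finite_preimage_intToReal_closedBall c (R + ε)).subset (hlocal c ε)

/-- the number of tiles containing a point t is uniformly bounded,
and the family of SRS tiles is locally finite. -/
theorem srsTile_boundedDegree_locallyFinite (d : ℕ) (hd : 0 < d) (r : Fin d → ℝ)
    (hr0 : r ⟨0, hd⟩ ≠ 0) (hcontr : srsContractive r) :
    (∃ B : ℕ, ∀ t : Fin d → ℝ,
      {x : Fin d → ℤ | t ∈ srsTile r x}.Finite ∧
      {x : Fin d → ℤ | t ∈ srsTile r x}.ncard ≤ B) ∧
    ∀ (c : Fin d → ℝ) (ε : ℝ), 0 < ε →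
      {x : Fin d → ℤ | (Metric.ball c ε ∩ srsTile r x).Nonempty}.Finite :=
  srsTile_boundedDegree_locallyFinite_general d r hcontr
end
end
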